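/- arXiv:1602.02134 — 2 statements merged into one kernel-verified Lean document; each statement's English description precedes it below -/
import Mathlib

section
/- Let Δ ⊆ ℂ be a nonempty compact set. Then the set of points I₀ ∈ ∂Δ for which there exists a point I_e ∉ Δ with |I₀ − I_e| = inf_{I ∈ Δ} |I − I_e| (i.e. the boundary points of Δ that are nearest points of Δ to some exterior point) is dense in ∂Δ. -/
open Metric

/-- For a compact set Δ ⊆ ℂ, the nonsingular boundary points (boundary points that are nearest
points of Δ to some exterior point) are dense in the boundary ∂Δ. -/
theorem stmt2 (Δ : Set ℂ) (hΔ : IsCompact Δ) (hne : Δ.Nonempty) :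
    frontier Δ ⊆
      closure {I₀ : ℂ | I₀ ∈ frontier Δ ∧
        ∃ Ie : ℂ, Ie ∉ Δ ∧ dist I₀ Ie = Metric.infDist Ie Δ} := by
  have hΔcl : IsClosed Δ := hΔ.isClosed
  intro x hx
  have hxΔ : x ∈ Δ := by
    have := hx.1
    rwa [hΔcl.closure_eq] at this
  rw [Metric.mem_closure_iff]
  intro ε hε
  have hxcl : x ∈ closure Δᶜ := by
    rw [closure_compl]; exact hx.2
  rw [Metric.mem_closure_iff] at hxcl
  obtain ⟨y, hy, hxy⟩ := hxcl (ε/2) (by linarith)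
  obtain ⟨z, hzΔ, hzd⟩ := hΔ.exists_infDist_eq_dist hne y
  have hyz : y ≠ z := fun h => hy (h ▸ hzΔ)
  have hd : 0 < dist y z := dist_pos.2 hyz
  -- z is a frontier point of Δ
  have hzfr : z ∈ frontier Δ := by
    rw [frontier, hΔcl.closure_eq]
    refine ⟨hzΔ, fun hint => ?_⟩
    rw [mem_interior_iff_mem_nhds, Metric.mem_nhds_iff] at hint
    obtain ⟨r, hr, hball⟩ := hint
    set t : ℝ := min (r / (2 * dist y z)) (1/2) with ht
    have ht0 : 0 < t := lt_min (by positivity) (by norm_num)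
    have ht1 : t < 1 := lt_of_le_of_lt (min_le_right _ _) (by norm_num)
    set z' : ℂ := z + (t : ℂ) * (y - z) with hz'
    have hz'Δ : z' ∈ Δ := by
      apply hball
      simp only [Metric.mem_ball, dist_eq_norm, hz']
      have h1 : z + (t : ℂ) * (y - z) - z = (t : ℂ) * (y - z) := by ring
      rw [h1, norm_mul, Complex.norm_real, Real.norm_eq_abs, abs_of_pos ht0]
      have : t ≤ r / (2 * dist y z) := min_le_left _ _
      calc t * ‖y - z‖ = t * dist y z := by rw [dist_eq_norm]
        _ ≤ (r / (2 * dist y z)) * dist y z := by nlinarith [dist_nonneg (x := y) (y := z)]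
        _ = r / 2 := by field_simp
        _ < r := by linarith
    have hlt : dist y z' < dist y z := by
      have h2 : y - z' = ((1 - t : ℝ) : ℂ) * (y - z) := by push_cast; ring
      rw [dist_eq_norm, h2, norm_mul, Complex.norm_real, Real.norm_eq_abs,
        abs_of_pos (by linarith : (0:ℝ) < 1 - t), ← dist_eq_norm]
      nlinarith
    have : infDist y Δ ≤ dist y z' := infDist_le_dist_of_mem hz'Δ
    rw [hzd] at this
    linarith
  refine ⟨z, ⟨hzfr, y, hy, by rw [dist_comm]; exact hzd.symm⟩, ?_⟩
  have h1 : infDist y Δ ≤ dist y x := infDist_le_dist_of_mem hxΔ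
  rw [hzd] at h1
  calc dist x z ≤ dist x y + dist y z := dist_triangle _ _ _
    _ ≤ dist x y + dist y x := by linarith
    _ < ε := by rw [dist_comm y x]; linarith
end

section
/- For r ∈ (0,1), ∫_{−1}^{0} dz / √((−z)(r−z)(1−rz)) = K(√(1−r²)), where K is the complete elliptic integral of the first kind. -/
open Real intervalIntegral

/-- The complete elliptic integral of the first kind. -/
noncomputable def ellK (k : ℝ) : ℝ :=
  ∫ t in (0:ℝ)..(Real.pi / 2), 1 / Real.sqrt (1 - k ^ 2 * Real.sin t ^ 2)

/-!
Substituting `z = (t - 1) / (t + 1)` turns the integral into `2 / (1 + r) · K(m)` with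
`m = (1 - r) / (1 + r)`, where `K` is taken in Jacobi's form
`K(k) = ∫₀¹ dx / √((1 - x²)(1 - k²x²))` (the substitution `x = sin θ`).
Landen's transformation `K(2√m / (1 + m)) = (1 + m) K(m)`, i.e. the substitution
`x = (1 + m) t / (1 + m t²)`, finishes the proof, because `1 + m = 2 / (1 + r)` and
`2√m / (1 + m) = √(1 - r²)`. All three substitutions are instances of the change of variables
formula for monotone maps, which needs no integrability, so the endpoint singularities of the
integrands never have to be estimated.
-/

open MeasureTheory Set

section ChangeOfVariables

variable {E : Type*} [NormedAddCommGroup E] [NormedSpace ℝ E]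

theorem integral_Icc_eq_of_hasDerivAt_of_deriv_nonneg {f f' : ℝ → ℝ} {g h : ℝ → E}
    {a b c d : ℝ} (hab : a ≤ b) (hf : ContinuousOn f (Icc a b))
    (hff' : ∀ x ∈ Ioo a b, HasDerivAt f (f' x) x) (hf' : ∀ x ∈ Ioo a b, 0 ≤ f' x)
    (hfa : f a = c) (hfb : f b = d) (hh : ∀ x ∈ Ioo a b, f' x • g (f x) = h x) :
    ∫ u in Icc c d, g u = ∫ x in Icc a b, h x := by
  subst hfa hfb
  rw [← integral_Icc_deriv_smul_of_deriv_nonneg hf hff' hf' hab, integral_Icc_eq_integral_Ioo,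
    integral_Icc_eq_integral_Ioo]
  exact setIntegral_congr_fun measurableSet_Ioo hh

theorem intervalIntegral_eq_integral_Icc {f : ℝ → E} {a b : ℝ} (hab : a ≤ b) :
    ∫ x in a..b, f x = ∫ x in Icc a b, f x := by
  rw [integral_of_le hab, integral_Icc_eq_integral_Ioc]

end ChangeOfVariables

theorem one_div_sqrt_sq_mul {c : ℝ} (hc : 0 < c) (X : ℝ) :
    1 / √(c ^ 2 * X) = c⁻¹ * (1 / √X) := by
  rw [Real.sqrt_mul (sq_nonneg c), Real.sqrt_sq hc.le, one_div, mul_inv, one_div]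

noncomputable def ellKIntegrand (k x : ℝ) : ℝ :=
  1 / √((1 - x ^ 2) * (1 - k ^ 2 * x ^ 2))

theorem ellK_eq_integral_Icc (k : ℝ) : ellK k = ∫ x in Icc 0 1, ellKIntegrand k x := by
  rw [ellK, intervalIntegral_eq_integral_Icc (by positivity)]
  symm
  refine integral_Icc_eq_of_hasDerivAt_of_deriv_nonneg (by positivity)
    continuous_sin.continuousOn (fun θ _ => hasDerivAt_sin θ) (fun θ hθ => ?_) sin_zero
    sin_pi_div_two (fun θ hθ => ?_)
  · exact (cos_pos_of_mem_Ioo ⟨by linarith [hθ.1, pi_pos], hθ.2⟩).le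
  · have hcos : 0 < cos θ := cos_pos_of_mem_Ioo ⟨by linarith [hθ.1, pi_pos], hθ.2⟩
    rw [smul_eq_mul, ellKIntegrand, ← cos_sq', one_div_sqrt_sq_mul hcos, ← mul_assoc,
      mul_inv_cancel₀ hcos.ne', one_mul]

theorem ellK_landen {m : ℝ} (hm0 : 0 ≤ m) (hm1 : m ≤ 1) :
    ellK (2 * √m / (1 + m)) = (1 + m) * ellK m := by
  have hk : (2 * √m / (1 + m)) ^ 2 = 4 * m / (1 + m) ^ 2 := by
    rw [div_pow, mul_pow, sq_sqrt hm0]; ring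
  have hden : ∀ t, 0 < 1 + m * t ^ 2 := fun t => by positivity
  rw [ellK_eq_integral_Icc, ellK_eq_integral_Icc, ← MeasureTheory.integral_const_mul]
  refine integral_Icc_eq_of_hasDerivAt_of_deriv_nonneg
    (f := fun t => (1 + m) * t / (1 + m * t ^ 2))
    (f' := fun t => (1 + m) * (1 - m * t ^ 2) / (1 + m * t ^ 2) ^ 2) zero_le_one
    (by fun_prop (disch := exact fun t _ => (hden t).ne')) (fun t _ => ?_) (fun t ht => ?_)
    (by simp) (by field_simp) (fun t ht => ?_)
  · refine (((hasDerivAt_id' t).const_mul (1 + m)).div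
      (((hasDerivAt_pow 2 t).const_mul m).const_add 1) (hden t).ne').congr_deriv ?_
    ring
  · have ht2 : 0 < 1 - m * t ^ 2 := by nlinarith [ht.1, ht.2]
    exact div_nonneg (mul_nonneg (by linarith) ht2.le) (pow_pos (hden t) 2).le
  · have ht2 : 0 < 1 - m * t ^ 2 := by nlinarith [ht.1, ht.2]
    have hc : 0 < (1 - m * t ^ 2) / (1 + m * t ^ 2) ^ 2 := div_pos ht2 (pow_pos (hden t) 2)
    have hrad : (1 - ((1 + m) * t / (1 + m * t ^ 2)) ^ 2) *
        (1 - (2 * √m / (1 + m)) ^ 2 * ((1 + m) * t / (1 + m * t ^ 2)) ^ 2) =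
        ((1 - m * t ^ 2) / (1 + m * t ^ 2) ^ 2) ^ 2 * ((1 - t ^ 2) * (1 - m ^ 2 * t ^ 2)) := by
      rw [hk]
      field_simp [(hden t).ne']
      ring
    simp only [smul_eq_mul, ellKIntegrand]
    rw [hrad, one_div_sqrt_sq_mul hc]
    field_simp [(hden t).ne']

theorem integral_Icc_neg_one_zero_eq_ellK {r : ℝ} (hr : -1 < r) :
    ∫ z in Icc (-1) 0, 1 / √((-z) * (r - z) * (1 - r * z)) =
      2 / (1 + r) * ellK ((1 - r) / (1 + r)) := by
  rw [ellK_eq_integral_Icc, ← MeasureTheory.integral_const_mul]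
  refine integral_Icc_eq_of_hasDerivAt_of_deriv_nonneg (f := fun t => (t - 1) / (t + 1))
    (f' := fun t => 2 / (t + 1) ^ 2) zero_le_one
    (ContinuousOn.div (by fun_prop) (by fun_prop) fun t ht => by linarith [ht.1])
    (fun t ht => ?_) (fun t _ => by positivity) (by norm_num) (by norm_num) (fun t ht => ?_)
  · have ht1 : t + 1 ≠ 0 := by linarith [ht.1]
    refine (((hasDerivAt_id' t).sub_const 1).div
      ((hasDerivAt_id' t).add_const 1) ht1).congr_deriv ?_
    field_simp; ring
  · have ht1 : 0 < t + 1 := by linarith [ht.1]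
    have hc : 0 < (1 + r) / (t + 1) ^ 2 := div_pos (by linarith) (by positivity)
    have hrad : (-((t - 1) / (t + 1))) * (r - (t - 1) / (t + 1)) * (1 - r * ((t - 1) / (t + 1))) =
        ((1 + r) / (t + 1) ^ 2) ^ 2 * ((1 - t ^ 2) * (1 - ((1 - r) / (1 + r)) ^ 2 * t ^ 2)) := by
      have : 1 + r ≠ 0 := by linarith
      field_simp; ring
    simp only [smul_eq_mul, ellKIntegrand]
    rw [hrad, one_div_sqrt_sq_mul hc]
    field_simp

/-- For r ∈ (0,1), ∫_{−1}^{0} dz/√((−z)(r−z)(1−rz)) = K(√(1−r²)). -/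
theorem stmt5 (r : ℝ) (hr : r ∈ Set.Ioo (0 : ℝ) 1) :
    (∫ z in (-1 : ℝ)..0, 1 / Real.sqrt ((-z) * (r - z) * (1 - r * z))) =
      ellK (Real.sqrt (1 - r ^ 2)) := by
  obtain ⟨hr0, hr1⟩ := hr
  set m := (1 - r) / (1 + r) with hm
  have hm0 : 0 ≤ m := div_nonneg (by linarith) (by linarith)
  have hm1 : m ≤ 1 := (div_le_one (by linarith)).2 (by linarith)
  have h1m : 1 + m = 2 / (1 + r) := by rw [hm]; field_simp; ring
  have hmodulus : 2 * √m / (1 + m) = √(1 - r ^ 2) := by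
    have h1r : 1 - r ^ 2 = (1 + r) ^ 2 * m := by rw [hm]; field_simp; ring
    rw [h1r, sqrt_mul (sq_nonneg _), sqrt_sq (by linarith), h1m]
    field_simp
  rw [intervalIntegral_eq_integral_Icc (by norm_num),
    integral_Icc_neg_one_zero_eq_ellK (by linarith), ← hmodulus, ellK_landen hm0 hm1, h1m]
end
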